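/- Let 0 < ε ≤ 1 and let u, v ∈ L²(ℝ) with u frequency-supported in {|ξ| ≥ ε^{-1}} and v frequency-supported in {|ξ| ≤ ε^{-1}/8} with v ∈ L^∞. Then ‖u ∂_x v‖_{L²} ≤ ε^{-1} ‖u‖_{L²} ‖v‖_{L^∞}. -/

import Mathlib

/-!
By Hölder, `‖u ∂ₓv‖₂ ≤ ‖u‖₂ ‖∂ₓv‖_∞`, so everything rests on Bernstein's inequality
`‖∂ₓv‖_∞ ≤ 2πM ‖v‖_∞` for `v` with spectrum in `[-M, M]`; with `M = ε⁻¹/8` the constant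
`2πM = (π/4) ε⁻¹` is at most `ε⁻¹`.

Bernstein's inequality follows from Boas's formula. The Fourier series of the triangle wave gives,
for `|ξ| ≤ M`, `-2πiξ = ∑ₖ cₖ (e(-hₖξ) - e(hₖξ))` with `cₖ = (8M/π) (-1)ᵏ/(2k+1)²` and
`hₖ = (2k+1)/(4M)`. Multiplying this identity by the spectrum of `v` and transforming back gives
`v'(x) = ∑ₖ cₖ (v(x + hₖ) - v(x - hₖ))`, and `∑ₖ |cₖ| = πM`.
-/

open MeasureTheory Real Complex
open scoped FourierTransform

-- The `n = 0` term vanishes because `1 / 0 = 0`.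
lemma hasSum_one_div_nat_sq_mul_cos {x : ℝ} (hx : x ∈ Set.Icc (0 : ℝ) 1) :
    HasSum (fun n : ℕ => 1 / (n : ℝ) ^ 2 * Real.cos (2 * π * n * x))
      (π ^ 2 * (x ^ 2 - x + 1 / 6)) := by
  have hB₂ : (Polynomial.map (algebraMap ℚ ℝ) (Polynomial.bernoulli 2)).eval x
      = x ^ 2 - x + 1 / 6 := by
    simp [Polynomial.bernoulli, Finset.sum_range_succ]
    ring
  have h := hasSum_one_div_nat_pow_mul_cos one_ne_zero hx
  rw [mul_one, hB₂] at h
  convert h using 2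
  norm_num [Nat.factorial]
  ring

lemma hasSum_one_div_odd_sq_mul_cos {x : ℝ} (hx : x ∈ Set.Icc (0 : ℝ) (1 / 2)) :
    HasSum (fun k : ℕ => 1 / (2 * k + 1 : ℝ) ^ 2 * Real.cos (2 * π * (2 * k + 1) * x))
      (π ^ 2 / 8 - π ^ 2 * x / 2) := by
  obtain ⟨hx0, hx1⟩ := hx
  set f : ℕ → ℝ := fun n => 1 / (n : ℝ) ^ 2 * Real.cos (2 * π * n * x) with hf
  have hall : HasSum f (π ^ 2 * (x ^ 2 - x + 1 / 6)) :=
    hasSum_one_div_nat_sq_mul_cos ⟨hx0, by linarith⟩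
  -- the even terms are a quarter of the full series at `2x`
  have heven : HasSum (fun k => f (2 * k)) (π ^ 2 * ((2 * x) ^ 2 - 2 * x + 1 / 6) / 4) := by
    refine ((hasSum_one_div_nat_sq_mul_cos ⟨by linarith, by linarith⟩).div_const 4).congr_fun
      fun k => ?_
    simp only [hf, Nat.cast_mul, Nat.cast_ofNat]
    ring_nf
  obtain ⟨s, hodd⟩ : Summable (fun k => f (2 * k + 1)) :=
    hall.summable.comp_injective (i := fun k => 2 * k + 1) fun a b h => by simpa using h
  obtain rfl : s = π ^ 2 / 8 - π ^ 2 * x / 2 := by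
    linear_combination (heven.even_add_odd hodd).unique hall
  refine hodd.congr_fun fun k => ?_
  simp only [hf, Nat.cast_add, Nat.cast_mul, Nat.cast_ofNat, Nat.cast_one]

lemma hasSum_one_div_odd_sq : HasSum (fun k : ℕ => 1 / (2 * k + 1 : ℝ) ^ 2) (π ^ 2 / 8) := by
  simpa using hasSum_one_div_odd_sq_mul_cos (x := 0) ⟨le_rfl, by norm_num⟩

lemma hasSum_neg_one_pow_div_odd_sq_mul_sin {s : ℝ} (hs : |s| ≤ 1 / 4) :
    HasSum (fun k : ℕ => (-1) ^ k / (2 * k + 1 : ℝ) ^ 2 * Real.sin (2 * π * (2 * k + 1) * s))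
      (π ^ 2 * s / 2) := by
  obtain ⟨hs0, hs1⟩ := abs_le.mp hs
  have h := (hasSum_one_div_odd_sq_mul_cos (x := s + 1 / 4) ⟨by linarith, by linarith⟩).neg
  rw [show -(π ^ 2 / 8 - π ^ 2 * (s + 1 / 4) / 2) = π ^ 2 * s / 2 by ring] at h
  refine h.congr_fun fun k => ?_
  have harg : 2 * π * (2 * k + 1) * (s + 1 / 4) = 2 * π * (2 * k + 1) * s + π / 2 + k * π := by
    ring
  rw [harg, Real.cos_add, Real.cos_add_pi_div_two, Real.sin_nat_mul_pi, Real.cos_nat_mul_pi]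
  ring

noncomputable def boasCoeff (M : ℝ) (k : ℕ) : ℝ := 8 * M / π * ((-1) ^ k / (2 * k + 1) ^ 2)

noncomputable def boasNode (M : ℝ) (k : ℕ) : ℝ := (2 * k + 1) / (4 * M)

lemma abs_boasCoeff {M : ℝ} (hM : 0 ≤ M) (k : ℕ) :
    |boasCoeff M k| = 8 * M / π * (1 / (2 * k + 1) ^ 2) := by
  rw [boasCoeff, abs_mul, abs_of_nonneg (by positivity), abs_div, abs_pow, abs_neg, abs_one,
    one_pow, abs_of_pos (by positivity)]

lemma hasSum_abs_boasCoeff {M : ℝ} (hM : 0 ≤ M) : HasSum (fun k => |boasCoeff M k|) (π * M) := by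
  simp only [abs_boasCoeff hM]
  rw [show π * M = 8 * M / π * (π ^ 2 / 8) by field_simp]
  exact hasSum_one_div_odd_sq.mul_left (8 * M / π)

lemma fourierChar_neg_sub_fourierChar (t : ℝ) :
    (𝐞 (-t) : ℂ) - 𝐞 t = -2 * I * Real.sin (2 * π * t) := by
  rw [Real.fourierChar_apply, Real.fourierChar_apply, Complex.ofReal_sin, mul_neg, ofReal_neg,
    neg_mul, ← neg_mul, Complex.exp_mul_I, Complex.exp_mul_I, Complex.cos_neg, Complex.sin_neg]
  ring

lemma hasSum_boasCoeff_smul_fourierChar_sub {M ξ : ℝ} (hM : 0 < M) (hξ : |ξ| ≤ M) :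
    HasSum (fun k => boasCoeff M k • ((𝐞 (-(boasNode M k * ξ)) : ℂ) - 𝐞 (boasNode M k * ξ)))
      (-2 * π * I * ξ) := by
  have hs : |ξ / (4 * M)| ≤ 1 / 4 := by
    rw [abs_div, abs_of_pos (show 0 < 4 * M by linarith), div_le_iff₀ (by linarith)]
    linarith
  have hM' : (M : ℂ) ≠ 0 := by exact_mod_cast hM.ne'
  have h := ((hasSum_neg_one_pow_div_odd_sq_mul_sin hs).mapL ofRealCLM).mul_left
    (-16 * M / π * I)
  rw [show (-2 * π * I * ξ : ℂ) = -16 * M / π * I * ofRealCLM (π ^ 2 * (ξ / (4 * M)) / 2) by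
    simp only [ofRealCLM_apply]; push_cast; field_simp; ring]
  refine h.congr_fun fun k => ?_
  rw [fourierChar_neg_sub_fourierChar, boasCoeff, boasNode, ofRealCLM_apply, real_smul]
  push_cast
  field_simp
  ring_nf

section Fourier

variable {E : Type*} [NormedAddCommGroup E] [NormedSpace ℂ E]

lemma Real.continuous_fourier_of_integrable {f : ℝ → E} (hf : Integrable f) :
    Continuous (𝓕 f) :=
  VectorFourier.fourierIntegral_continuous Real.continuous_fourierChar continuous_inner hf

lemma Real.fourier_fourierChar_smul (f : ℝ → E) (h x : ℝ) :
    𝓕 (fun ξ => 𝐞 (-(h * ξ)) • f ξ) x = 𝓕 f (x + h) := by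
  simp only [Real.fourier_eq, RCLike.inner_apply, conj_trivial, smul_smul,
    ← AddChar.map_add_eq_mul]
  congr! 3 with ξ
  congr 1
  ring

lemma Real.fourier_smul_sub {f g : ℝ → E} (hf : Integrable f) (hg : Integrable g) (c x : ℝ) :
    𝓕 (fun ξ => c • (f ξ - g ξ)) x = c • (𝓕 f x - 𝓕 g x) := by
  simp only [Real.fourier_eq]
  rw [← integral_sub ((Real.fourierIntegral_convergent_iff x).2 hf)
    ((Real.fourierIntegral_convergent_iff x).2 hg), ← integral_smul]
  congr 1 with ξ
  rw [smul_comm, smul_sub]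

lemma Real.fourier_tsum [CompleteSpace E] {F : ℕ → ℝ → E} (hF : ∀ k, Integrable (F k))
    (hsum : Summable fun k => ∫ ξ, ‖F k ξ‖) (x : ℝ) :
    𝓕 (fun ξ => ∑' k, F k ξ) x = ∑' k, 𝓕 (F k) x := by
  simp only [Real.fourier_eq, Circle.smul_def, ← tsum_const_smul'']
  refine (integral_tsum_of_summable_integral_norm (fun k => ?_) ?_).symm
  · simpa only [Circle.smul_def] using (Real.fourierIntegral_convergent_iff x).2 (hF k)
  · simpa only [norm_smul, Circle.norm_coe, one_mul] using hsum

end Fourier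

section BandLimited

variable {E : Type*} [NormedAddCommGroup E] {M : ℝ}

lemma hasCompactSupport_of_eq_zero_of_lt_abs {f : ℝ → E} (h : ∀ ξ, M < |ξ| → f ξ = 0) :
    HasCompactSupport f :=
  .intro (isCompact_closedBall 0 M) fun ξ hξ => h ξ (by simpa using hξ)

variable [NormedSpace ℂ E] {w : ℝ → E}

lemma integrable_smul_of_eq_zero_of_lt_abs (hw : Integrable w)
    (hsupp : ∀ ξ, M < |ξ| → w ξ = 0) : Integrable (fun ξ : ℝ => ξ • w ξ) := by
  refine (hw.norm.const_mul M).mono' (continuous_id.aestronglyMeasurable.smul hw.1)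
    (.of_forall fun ξ => ?_)
  rw [norm_smul, Real.norm_eq_abs]
  rcases le_or_gt |ξ| M with h | h
  · exact mul_le_mul_of_nonneg_right h (norm_nonneg _)
  · simp [hsupp ξ h]

variable [CompleteSpace E]

lemma deriv_fourier_eq_tsum_boas (hM : 0 < M) (hw : Integrable w)
    (hsupp : ∀ ξ, M < |ξ| → w ξ = 0) (x : ℝ) :
    deriv (𝓕 w) x = ∑' k, boasCoeff M k • (𝓕 w (x + boasNode M k) - 𝓕 w (x - boasNode M k)) := by
  let G : ℝ → ℝ → E := fun h ξ => 𝐞 (-(h * ξ)) • w ξ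
  have hG : ∀ h, Integrable (G h) := fun h => by
    simpa [G, mul_comm] using (Real.fourierIntegral_convergent_iff h).2 hw
  let F : ℕ → ℝ → E := fun k ξ => boasCoeff M k • (G (boasNode M k) ξ - G (-boasNode M k) ξ)
  have hF : ∀ ξ, HasSum (fun k => F k ξ) ((-2 * π * I * ξ) • w ξ) := by
    intro ξ
    rcases le_or_gt |ξ| M with h | h
    · convert (hasSum_boasCoeff_smul_fourierChar_sub hM h).smul_const (w ξ) using 2 with k
      simp only [F, G, Circle.smul_def, neg_mul, neg_neg, sub_smul, smul_assoc]
    · simp [F, G, hsupp ξ h]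
  have hnorm : ∀ k ξ, ‖F k ξ‖ ≤ 2 * |boasCoeff M k| * ‖w ξ‖ := by
    intro k ξ
    calc ‖F k ξ‖ ≤ |boasCoeff M k| * (‖G (boasNode M k) ξ‖ + ‖G (-boasNode M k) ξ‖) := by
          rw [norm_smul, Real.norm_eq_abs]
          exact mul_le_mul_of_nonneg_left (norm_sub_le _ _) (abs_nonneg _)
      _ = 2 * |boasCoeff M k| * ‖w ξ‖ := by
          simp only [G, Circle.norm_smul]
          ring
  have hsum : Summable fun k => ∫ ξ, ‖F k ξ‖ := by
    refine .of_nonneg_of_le (fun k => integral_nonneg fun ξ => norm_nonneg _)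
      (fun k => integral_mono_of_nonneg (.of_forall fun ξ => norm_nonneg _)
        (hw.norm.const_mul _) (.of_forall (hnorm k))) ?_
    simp only [integral_const_mul]
    exact ((hasSum_abs_boasCoeff hM.le).summable.mul_left 2).mul_right _
  rw [Real.deriv_fourier hw (integrable_smul_of_eq_zero_of_lt_abs hw hsupp),
    show (fun ξ : ℝ => (-2 * π * I * ξ) • w ξ) = fun ξ => ∑' k, F k ξ from
      funext fun ξ => (hF ξ).tsum_eq.symm,
    Real.fourier_tsum (F := F) (fun k => ((hG _).sub (hG _)).smul _) hsum]
  refine tsum_congr fun k => ?_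
  rw [Real.fourier_smul_sub (hG _) (hG _), Real.fourier_fourierChar_smul,
    Real.fourier_fourierChar_smul, sub_eq_add_neg x]

lemma norm_deriv_fourier_le (hM : 0 < M) (hw : Integrable w)
    (hsupp : ∀ ξ, M < |ξ| → w ξ = 0) {C : ℝ} (hC : ∀ y, ‖𝓕 w y‖ ≤ C) (x : ℝ) :
    ‖deriv (𝓕 w) x‖ ≤ 2 * π * M * C := by
  have hterm : ∀ k, ‖boasCoeff M k • (𝓕 w (x + boasNode M k) - 𝓕 w (x - boasNode M k))‖
      ≤ |boasCoeff M k| * (2 * C) := fun k => by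
    rw [norm_smul, Real.norm_eq_abs, two_mul]
    gcongr
    exact (norm_sub_le _ _).trans (add_le_add (hC _) (hC _))
  rw [deriv_fourier_eq_tsum_boas hM hw hsupp]
  calc _ ≤ π * M * (2 * C) :=
        tsum_of_norm_bounded ((hasSum_abs_boasCoeff hM.le).mul_right _) hterm
    _ = 2 * π * M * C := by ring

theorem norm_deriv_le_of_fourier_eq_zero {v : ℝ → E} (hM : 0 < M) (hvc : Continuous v)
    (hvi : Integrable v) (hsupp : ∀ ξ, M < |ξ| → 𝓕 v ξ = 0) {C : ℝ} (hC : ∀ y, ‖v y‖ ≤ C)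
    (x : ℝ) : ‖deriv v x‖ ≤ 2 * π * M * C := by
  have hint : Integrable (𝓕 v) :=
    (Real.continuous_fourier_of_integrable hvi).integrable_of_hasCompactSupport
      (hasCompactSupport_of_eq_zero_of_lt_abs hsupp)
  have hv : v = 𝓕 (fun ξ => 𝓕 v (-ξ)) := by
    rw [← fourierInv_eq_fourier_comp_neg, hvc.fourierInv_fourier_eq hvi hint]
  have h := norm_deriv_fourier_le hM hint.comp_neg (fun ξ hξ => hsupp _ (by rwa [abs_neg]))
    (hv ▸ hC) x
  rwa [← hv] at h

end BandLimited

theorem Continuous.enorm_le_eLpNorm_top {X F : Type*} [TopologicalSpace X] [MeasurableSpace X]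
    [NormedAddCommGroup F] {μ : Measure X} [μ.IsOpenPosMeasure] {f : X → F} (hf : Continuous f)
    (x : X) : ‖f x‖ₑ ≤ eLpNorm f ⊤ μ := by
  have hdense : Dense {y | ‖f y‖ₑ ≤ eLpNorm f ⊤ μ} :=
    μ.dense_of_ae (by simpa only [eLpNorm_exponent_top] using enorm_ae_le_eLpNormEssSup f μ)
  have hclosed : IsClosed {y | ‖f y‖ₑ ≤ eLpNorm f ⊤ μ} := isClosed_le hf.enorm continuous_const
  exact hclosed.closure_subset (hdense.closure_eq ▸ Set.mem_univ x)

theorem stmt_6_general (ε : ℝ) (hε0 : 0 < ε) (u v : ℝ → ℂ)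
    (hvinf : MemLp v ⊤ volume) (hvi : Integrable v) (hvd : Differentiable ℝ v)
    (hsv : ∀ ξ : ℝ, ε⁻¹ / 8 < |ξ| → 𝓕 v ξ = 0) :
    eLpNorm (fun x => u x * deriv v x) 2 volume
      ≤ ENNReal.ofReal ε⁻¹ * eLpNorm u 2 volume * eLpNorm v ⊤ volume := by
  set C := (eLpNorm v ⊤ volume).toReal
  have hvC : ∀ y, ‖v y‖ ≤ C := fun y => by
    simpa only [toReal_enorm] using
      ENNReal.toReal_mono hvinf.2.ne (hvd.continuous.enorm_le_eLpNorm_top (μ := volume) y)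
  have hdC : ∀ x, ‖deriv v x‖ ≤ ε⁻¹ * C := fun x => calc
    ‖deriv v x‖ ≤ 2 * π * (ε⁻¹ / 8) * C :=
      norm_deriv_le_of_fourier_eq_zero (by positivity) hvd.continuous hvi hsv hvC x
    _ ≤ ε⁻¹ * C := by
      have := mul_nonneg (mul_nonneg (sub_nonneg.2 pi_le_four) (inv_pos.2 hε0).le)
        (ENNReal.toReal_nonneg : 0 ≤ C)
      linarith
  calc eLpNorm (fun x => u x * deriv v x) 2 volume ≤ eLpNorm ((ε⁻¹ * C) • u) 2 volume :=
        eLpNorm_mono fun x => by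
          rw [norm_mul, Pi.smul_apply, norm_smul, mul_comm ‖u x‖, Real.norm_eq_abs]
          gcongr
          exact (hdC x).trans (le_abs_self _)
    _ = ENNReal.ofReal ε⁻¹ * eLpNorm u 2 volume * eLpNorm v ⊤ volume := by
        rw [eLpNorm_const_smul, Real.enorm_eq_ofReal (by positivity),
          ENNReal.ofReal_mul (by positivity), ENNReal.ofReal_toReal hvinf.2.ne]
        ring

/-- High–low interaction estimate: if u is frequency-supported in {|ξ| ≥ ε⁻¹}
and v is frequency-supported in {|ξ| ≤ ε⁻¹/8} with v ∈ L^∞, then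
‖u ∂ₓv‖_{L²} ≤ ε⁻¹ ‖u‖_{L²} ‖v‖_{L^∞}. -/
theorem stmt_6 (ε : ℝ) (hε0 : 0 < ε) (hε1 : ε ≤ 1) (u v : ℝ → ℂ)
    (hu2 : MemLp u 2 volume) (hui : Integrable u)
    (hvinf : MemLp v ⊤ volume) (hvi : Integrable v) (hvd : Differentiable ℝ v)
    (hsu : ∀ ξ : ℝ, |ξ| < ε⁻¹ → 𝓕 u ξ = 0)
    (hsv : ∀ ξ : ℝ, ε⁻¹ / 8 < |ξ| → 𝓕 v ξ = 0) :
    eLpNorm (fun x => u x * deriv v x) 2 volume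
      ≤ ENNReal.ofReal ε⁻¹ * eLpNorm u 2 volume * eLpNorm v ⊤ volume :=
  stmt_6_general ε hε0 u v hvinf hvi hvd hsv
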